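/- arXiv:2111.07415 — 7 statements merged into one kernel-verified Lean document; each statement's English description precedes it below -/
import Mathlib

section
/- The cardinality N(m) of the LOCO code RC_m satisfies N(0) = 1, N(1) = 2, N(2) = 4, N(3) = 6, and for every m ≥ 4, N(m) = N(m−1) + N(m−3) + N(m−4). -/
/-- The RR constraint: no index `i` with `i + 2 ≤ m - 1` such that `c i = 0` and `c (i+2) = 0`
(bit `false` plays the role of `0`, bit `true` the role of `1`). -/
def RRok (m : ℕ) (c : Fin m → Bool) : Prop :=
  ∀ i j : Fin m, (j : ℕ) = (i : ℕ) + 2 → ¬(c i = false ∧ c j = false)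

instance (m : ℕ) : DecidablePred (RRok m) := fun c => by
  unfold RRok; infer_instance

/-- The LOCO code `RC_m`: all binary words of length `m` satisfying the RR constraint. -/
def RC (m : ℕ) : Finset (Fin m → Bool) := Finset.univ.filter (RRok m)

/-- `N m = |RC_m|`. -/
def N (m : ℕ) : ℕ := (RC m).card

/-! Split words at bit `0` (`Fin.cons b w`). `cons 1 w` is an RR word iff `w` is, and `cons 0 w` is
one iff `w` is and `w₁ = 1`. Those `w` split again: `cons 1 u` with `u₀ = 1`, counted by `N (m - 3)`,
and `cons 0 u` with `u₀ = u₁ = 1`, counted by `N (m - 4)`. -/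

open Finset

theorem rrOk_cons_true {n : ℕ} (w : Fin n → Bool) :
    RRok (n + 1) (Fin.cons true w) ↔ RRok n w := by
  simp [RRok, Fin.forall_fin_succ]

theorem rrOk_cons_false {n : ℕ} (w : Fin (n + 2) → Bool) :
    RRok (n + 3) (Fin.cons false w) ↔ w 1 = true ∧ RRok (n + 2) w := by
  simp [RRok, Fin.forall_fin_succ]

theorem card_filter_head_eq_and {α : Type*} [Fintype α] [DecidableEq α] {n : ℕ} (b : α)
    (p : (Fin (n + 1) → α) → Prop) [DecidablePred p] :
    #{c | c 0 = b ∧ p c} = #{w : Fin n → α | p (Fin.cons b w)} := by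
  refine card_nbij' Fin.tail (fun w => Fin.cons b w) ?_ ?_ ?_ ?_
  · rintro c hc
    simp only [coe_filter, mem_univ, true_and, Set.mem_ofPred_eq] at hc ⊢
    obtain ⟨rfl, hc⟩ := hc
    rwa [Fin.cons_self_tail]
  · intro w hw
    simpa using hw
  · rintro c hc
    simp only [coe_filter, mem_univ, true_and, Set.mem_ofPred_eq] at hc
    obtain ⟨rfl, -⟩ := hc
    exact Fin.cons_self_tail c
  · intro w _
    exact Fin.tail_cons _ _

theorem card_filter_split_head {n : ℕ} (p : (Fin (n + 1) → Bool) → Prop) [DecidablePred p] :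
    #{c | p c} = #{w | p (Fin.cons true w)} + #{w | p (Fin.cons false w)} := by
  rw [← card_filter_head_eq_and, ← card_filter_head_eq_and,
    ← card_filter_add_card_filter_not (fun c => c 0 = true)]
  simp only [filter_filter, Bool.not_eq_true, and_comm]

theorem card_filter_head_true_rrOk (n : ℕ) :
    #{c : Fin (n + 1) → Bool | c 0 = true ∧ RRok (n + 1) c} = N n := by
  rw [card_filter_head_eq_and]
  simp only [rrOk_cons_true]
  rfl

theorem N_add_four (k : ℕ) : N (k + 4) = N (k + 3) + N (k + 1) + N k := by
  have second_bit : #{w : Fin (k + 3) → Bool | w 1 = true ∧ RRok (k + 3) w} = N (k + 1) + N k := by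
    rw [card_filter_split_head]
    simp only [Fin.cons_one, rrOk_cons_true, rrOk_cons_false]
    rw [card_filter_head_true_rrOk, card_filter_head_eq_and]
    simp only [Fin.cons_one, rrOk_cons_true, card_filter_head_true_rrOk]
  rw [N, RC, card_filter_split_head]
  simp only [rrOk_cons_true, rrOk_cons_false, second_bit]
  rw [add_assoc]
  rfl

theorem stmt0 :
    N 0 = 1 ∧ N 1 = 2 ∧ N 2 = 4 ∧ N 3 = 6 ∧
    ∀ m : ℕ, 4 ≤ m → N m = N (m - 1) + N (m - 3) + N (m - 4) := by
  refine ⟨by decide, by decide, by decide, by decide, ?_⟩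
  intro m hm
  obtain ⟨k, rfl⟩ := Nat.exists_eq_add_of_le' hm
  exact N_add_four k
end

section
/- For every m ≥ 4, every codeword of RC_m whose left-most two bits are 00 in fact begins with 0011 from the left, and the number of such codewords is exactly N(m−4). -/
/-!
In an RR word a `0` at position `i + 2` forces a `1` at position `i`, so a leading `00` forces
a leading `0011`. Conversely, putting `0011` in front of any RR word of length `m - 4` gives an
RR word, because the `11` shields the two top bits of the shorter word; hence dropping the four
leading bits is a bijection onto `RC (m - 4)`.
-/

theorem mem_RC {m : ℕ} {c : Fin m → Bool} : c ∈ RC m ↔ RRok m c := by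
  simp [RC]

namespace RRok

variable {m k n : ℕ}

theorem comp_castAdd {c : Fin (k + n) → Bool} (h : RRok (k + n) c) :
    RRok k (fun i => c (Fin.castAdd n i)) :=
  fun i j hij => h _ _ (by simpa using hij)

theorem comp_natAdd {c : Fin (k + n) → Bool} (h : RRok (k + n) c) :
    RRok n (fun i => c (Fin.natAdd k i)) :=
  fun i j hij => h _ _ (by simp [hij]; omega)

theorem eq_true_of_eq_false {c : Fin m → Bool} (h : RRok m c) {i j : Fin m}
    (hij : (j : ℕ) = i + 2) (hj : c j = false) : c i = true := by
  simpa [hj] using h i j hij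

-- `Fin.append d w` puts `d` at the low positions, so `w` is the left-most part of the word.
theorem append_iff {d : Fin k → Bool} {w : Fin n → Bool}
    (hw : ∀ i : Fin n, (i : ℕ) < 2 → w i = true) :
    RRok (k + n) (Fin.append d w) ↔ RRok k d ∧ RRok n w := by
  refine ⟨fun h => ?_, fun ⟨hd, hw'⟩ i j hij => ?_⟩
  · exact ⟨by simpa using h.comp_castAdd, by simpa using h.comp_natAdd⟩
  · induction j using Fin.addCases with
    | left j =>
      induction i using Fin.addCases with
      | left i => simpa using hd i j (by simpa using hij)
      | right i => simp at hij; omega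
    | right j =>
      induction i using Fin.addCases with
      | left i => simp [hw j (by simp at hij; omega)]
      | right i => simpa using hw' i j (by simp at hij; omega)

theorem append_castAdd_of_top_two_eq_false {c : Fin (k + 4) → Bool} (h : RRok (k + 4) c)
    (h3 : c (Fin.natAdd k 3) = false) (h2 : c (Fin.natAdd k 2) = false) :
    Fin.append (fun i => c (Fin.castAdd 4 i)) ![true, true, false, false] = c := by
  conv_rhs => rw [← Fin.append_castAdd_natAdd (f := c)]
  congr 1
  funext i
  fin_cases i
  · exact (h.eq_true_of_eq_false (j := Fin.natAdd k 2) (by simp) h2).symm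
  · exact (h.eq_true_of_eq_false (j := Fin.natAdd k 3) (by simp) h3).symm
  · exact h2.symm
  · exact h3.symm

end RRok

theorem card_RC_filter_top_two_eq_false (k : ℕ) :
    ((RC (k + 4)).filter (fun c => c (Fin.natAdd k 3) = false ∧ c (Fin.natAdd k 2) = false)).card
      = N k := by
  have hw : ∀ i : Fin 4, (i : ℕ) < 2 → ![true, true, false, false] i = true := by decide
  refine Finset.card_nbij' (fun c i => c (Fin.castAdd 4 i))
    (fun d => Fin.append d ![true, true, false, false]) ?_ ?_ ?_ ?_
  · intro c hc
    simp only [Finset.coe_filter, mem_RC, Finset.mem_coe] at hc ⊢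
    exact hc.1.comp_castAdd
  · intro d hd
    simp only [Finset.coe_filter, mem_RC, Finset.mem_coe] at hd ⊢
    exact ⟨(RRok.append_iff hw).2 ⟨hd, by decide⟩, by simp, by simp⟩
  · intro c hc
    simp only [Finset.coe_filter, mem_RC] at hc
    exact hc.1.append_castAdd_of_top_two_eq_false hc.2.1 hc.2.2
  · intro d _
    exact funext (Fin.append_left d _)

/-- For `m ≥ 4`, every codeword of `RC_m` whose left-most two bits are `00` in fact begins
with `0011` from the left, and the number of such codewords is exactly `N (m-4)`. -/
theorem stmt3 (m : ℕ) (hm : 4 ≤ m) :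
    (∀ c ∈ RC m, c ⟨m - 1, by omega⟩ = false → c ⟨m - 2, by omega⟩ = false →
      c ⟨m - 3, by omega⟩ = true ∧ c ⟨m - 4, by omega⟩ = true) ∧
    ((RC m).filter (fun c =>
      c ⟨m - 1, by omega⟩ = false ∧ c ⟨m - 2, by omega⟩ = false)).card = N (m - 4) := by
  refine ⟨fun c hc h1 h2 => ?_, ?_⟩
  · have h := mem_RC.1 hc
    exact ⟨h.eq_true_of_eq_false (by simp; omega) h1, h.eq_true_of_eq_false (by simp; omega) h2⟩
  · obtain ⟨k, rfl⟩ := Nat.exists_eq_add_of_le' hm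
    have top3 : (⟨k + 4 - 1, by omega⟩ : Fin (k + 4)) = Fin.natAdd k 3 := Fin.ext (by simp)
    have top2 : (⟨k + 4 - 2, by omega⟩ : Fin (k + 4)) = Fin.natAdd k 2 := Fin.ext (by simp)
    simpa only [top3, top2, Nat.add_sub_cancel] using card_RC_filter_top_two_eq_false k
end

section
/- Let m ≥ 1 and c = c_{m−1} ⋯ c_0 ∈ RC_m, and let a_i ∈ {0, 1} be the integer value of bit c_i. For each i ∈ {0, …, m−1}, define y_{i,1} = 1 if c_i = 1, i + 2 ≤ m − 1, and c_{i+2} = 0, and y_{i,1} = 0 otherwise; define y_{i,2} = 1 if c_i = 1, i + 1 ≤ m − 1, c_{i+1} = 0, and (i + 2 > m − 1 or c_{i+2} = 1), and y_{i,2} = 0 otherwise. With the conventions N(−1) = N(−2) = 1 and N(−3) = 0, the lexicographic index of c in RC_m satisfies g(c) = Σ_{i=0}^{m−1} a_i [ (1 − y_{i,1}) N(i−2) + (1 − y_{i,1} − y_{i,2}) N(i−3) ]. -/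
/-- Lexicographic order with `0 < 1`, bit significance decreasing from position `m-1`
down to position `0`: `c'` is strictly smaller than `c`. -/
def lexLt {m : ℕ} (c' c : Fin m → Bool) : Prop :=
  ∃ k : Fin m, c' k = false ∧ c k = true ∧ ∀ j : Fin m, k < j → c' j = c j

instance (m : ℕ) (c : Fin m → Bool) : DecidablePred (fun c' => lexLt c' c) := fun c' => by
  unfold lexLt; infer_instance

/-- The lexicographic index of `c` in `RC_m`: the number of codewords strictly smaller. -/
def gIdx (m : ℕ) (c : Fin m → Bool) : ℕ := ((RC m).filter (fun c' => lexLt c' c)).card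

/-- `N` extended to integer arguments, with `N (-1) = N (-2) = 1` and `N (-3) = 0`. -/
def Ni : ℤ → ℕ := fun k => if 0 ≤ k then N k.toNat else if k = -3 then 0 else 1

/-!
A codeword `c'` below `c` first differs from `c` at some position `i` with `c_i = 1`, `c'_i = 0`;
so `g(c)` is a sum over such `i` of the number of RR words `w` of length `i` that can be put under
`c_{m-1} ⋯ c_{i+1} 0`. The RR constraints across position `i` force `w_{i-2} = 1`, force
`w_{i-1} = 1` when `c_{i+1} = 0` (`y_{i,2} = 1`), and leave no choice at all when `c_{i+2} = 0`
(`y_{i,1} = 1`). There are `N(i-2)` RR words of length `i` with both top bits `1`, and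
`N(i-2) + N(i-3)` with `w_{i-2} = 1`: if `w_{i-1} = 0` then `w_{i-3} = 1` is forced as well.
-/

namespace LOCO

variable {m n : ℕ}

lemma mem_RC {c : Fin m → Bool} : c ∈ RC m ↔ RRok m c := by
  simp [RC]

def glue (t : Fin m → Bool) (w : Fin n → Bool) : Fin m → Bool :=
  fun j => if h : (j : ℕ) < n then w ⟨j, h⟩ else t j

lemma glue_of_lt (t : Fin m → Bool) (w : Fin n → Bool) {j : Fin m} (h : (j : ℕ) < n) :
    glue t w j = w ⟨j, h⟩ := dif_pos h

lemma glue_of_le (t : Fin m → Bool) (w : Fin n → Bool) {j : Fin m} (h : n ≤ (j : ℕ)) :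
    glue t w j = t j := dif_neg (by omega)

lemma glue_restrict (hn : n ≤ m) {t c' : Fin m → Bool}
    (h : ∀ j : Fin m, n ≤ (j : ℕ) → c' j = t j) :
    glue t (c' ∘ Fin.castLE hn) = c' := by
  funext j
  by_cases hj : (j : ℕ) < n
  · rw [glue_of_lt _ _ hj]; rfl
  · rw [glue_of_le _ _ (by omega), h j (by omega)]

def extensions (n : ℕ) (t : Fin m → Bool) : Finset (Fin m → Bool) :=
  (RC m).filter fun c' => ∀ j : Fin m, n ≤ (j : ℕ) → c' j = t j

def HighRR (n : ℕ) (t : Fin m → Bool) : Prop :=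
  ∀ i j : Fin m, (j : ℕ) = i + 2 → n ≤ (i : ℕ) → ¬(t i = false ∧ t j = false)

-- The RR constraints linking a low position `p < n` to a high position `p + 2 ≥ n`.
def Compatible (t : Fin m → Bool) (w : Fin n → Bool) : Prop :=
  ∀ (p : Fin n) (j : Fin m), (j : ℕ) = p + 2 → n ≤ (j : ℕ) → t j = false → w p = true

instance (t : Fin m → Bool) : DecidablePred (Compatible (n := n) t) := fun w => by
  unfold Compatible; infer_instance

lemma rrok_glue_iff (hn : n ≤ m) {t : Fin m → Bool} (ht : HighRR n t) (w : Fin n → Bool) :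
    RRok m (glue t w) ↔ RRok n w ∧ Compatible t w := by
  constructor
  · intro h
    refine ⟨fun p q hpq => ?_, fun p j hj hnj htj => ?_⟩
    · simpa [glue_of_lt] using h (p.castLE hn) (q.castLE hn) hpq
    · by_contra hwp
      exact h (p.castLE hn) j hj ⟨by simpa [glue_of_lt] using hwp, by rwa [glue_of_le _ _ hnj]⟩
  · rintro ⟨hw, hcomp⟩ i j hij ⟨hi, hj⟩
    by_cases hjn : (j : ℕ) < n
    · have hin : (i : ℕ) < n := by omega
      rw [glue_of_lt _ _ hin] at hi
      rw [glue_of_lt _ _ hjn] at hj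
      exact hw ⟨i, hin⟩ ⟨j, hjn⟩ hij ⟨hi, hj⟩
    by_cases hin : (i : ℕ) < n
    · rw [glue_of_lt _ _ hin] at hi
      rw [glue_of_le _ _ (by omega)] at hj
      simp [hcomp ⟨i, hin⟩ j hij (by omega) hj] at hi
    · rw [glue_of_le _ _ (by omega)] at hi hj
      exact ht i j hij (by omega) ⟨hi, hj⟩

lemma card_extensions (hn : n ≤ m) {t : Fin m → Bool} (ht : HighRR n t) :
    (extensions n t).card = ((RC n).filter (Compatible t)).card := by
  refine Finset.card_nbij' (fun c' => c' ∘ Fin.castLE hn) (glue t) ?_ ?_ ?_ ?_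
  · intro c' hc'
    simp only [Finset.mem_coe, extensions, Finset.mem_filter, mem_RC] at hc' ⊢
    rw [← rrok_glue_iff hn ht, glue_restrict hn hc'.2]
    exact hc'.1
  · intro w hw
    simp only [Finset.mem_coe, extensions, Finset.mem_filter, mem_RC] at hw ⊢
    exact ⟨(rrok_glue_iff hn ht w).2 hw, fun j hj => glue_of_le t w hj⟩
  · intro c' hc'
    simp only [Finset.mem_coe, extensions, Finset.mem_filter] at hc'
    exact glue_restrict hn hc'.2
  · intro w _
    funext p
    exact glue_of_lt t w p.2

lemma card_extensions_of_high_true (hn : n ≤ m) {t : Fin m → Bool} (ht : HighRR n t)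
    (htop : ∀ j : Fin m, n ≤ (j : ℕ) → (j : ℕ) < n + 2 → t j = true) :
    (extensions n t).card = N n := by
  rw [card_extensions hn ht, Finset.filter_true_of_mem, N]
  intro w _ p j hj hnj htj
  simp [htop j hnj (by omega)] at htj

lemma Ni_natCast (k : ℕ) : Ni k = N k := by simp [Ni]

lemma card_filter_top_two_true (k : ℕ) :
    ((RC k).filter fun w => ∀ p : Fin k, k ≤ (p : ℕ) + 2 → w p = true).card
      = Ni (k - 2) := by
  match k with
  | 0 | 1 => decide
  | n + 2 =>
    have hset : ((RC (n + 2)).filter fun w =>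
          ∀ p : Fin (n + 2), n + 2 ≤ (p : ℕ) + 2 → w p = true)
        = extensions n fun _ => true := by
      simp only [extensions, add_le_add_iff_right]
    rw [hset, card_extensions_of_high_true (by omega) (by simp [HighRR]) (by simp)]
    simpa using (Ni_natCast n).symm

lemma filter_second_top_true_and_last_true (n : ℕ) :
    ((RC (n + 3)).filter fun w =>
        (∀ p : Fin (n + 3), (p : ℕ) + 2 = n + 3 → w p = true) ∧ w (Fin.last (n + 2)) = true)
      = (RC (n + 3)).filter fun w =>
          ∀ p : Fin (n + 3), n + 3 ≤ (p : ℕ) + 2 → w p = true := by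
  refine Finset.filter_congr fun w _ =>
    ⟨fun ⟨hbit, hlast⟩ p hp => ?_, fun h => ⟨?_, ?_⟩⟩
  · obtain hp | rfl : (p : ℕ) + 2 = n + 3 ∨ p = Fin.last (n + 2) := by
      rw [Fin.ext_iff, Fin.val_last]; omega
    exacts [hbit p hp, hlast]
  · exact fun p hp => h p (by omega)
  · exact h _ (by simp)

-- With the top bit `0` and the next one `1`, the RR constraint forces the third bit to be `1`.
lemma filter_second_top_true_and_last_false (n : ℕ) :
    ((RC (n + 3)).filter fun w =>
        (∀ p : Fin (n + 3), (p : ℕ) + 2 = n + 3 → w p = true) ∧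
          ¬w (Fin.last (n + 2)) = true)
      = extensions n fun j => decide ((j : ℕ) < n + 2) := by
  refine Finset.filter_congr fun w hw =>
    ⟨fun ⟨hbit, hlast⟩ j hj => ?_, fun h => ⟨fun p hp => ?_, ?_⟩⟩
  · rw [Bool.not_eq_true] at hlast
    obtain hj | hj | rfl : (j : ℕ) = n ∨ (j : ℕ) + 2 = n + 3 ∨ j = Fin.last (n + 2) := by
      rw [Fin.ext_iff, Fin.val_last]; omega
    · have hrr := mem_RC.1 hw j (Fin.last _) (by simp [hj])
      cases hwj : w j <;> simp_all
    · simp only [hbit j hj, true_eq_decide_iff]; omega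
    · simp [hlast]
  · simpa [h p (by omega)] using (by omega : (p : ℕ) < n + 2)
  · simp [h (Fin.last _) (by simp)]

lemma card_filter_second_top_true (k : ℕ) :
    ((RC k).filter fun w => ∀ p : Fin k, (p : ℕ) + 2 = k → w p = true).card
      = Ni (k - 2) + Ni (k - 3) := by
  match k with
  | 0 | 1 | 2 => decide
  | n + 3 =>
    have hHigh : HighRR n fun j : Fin (n + 3) => decide ((j : ℕ) < n + 2) := by
      intro i j hij hi
      have := j.2
      simp only [decide_eq_false_iff_not, not_lt, not_and, not_le]; omega
    rw [← Finset.card_filter_add_card_filter_not (p := fun w => w (Fin.last (n + 2)) = true),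
      Finset.filter_filter, Finset.filter_filter, filter_second_top_true_and_last_true,
      filter_second_top_true_and_last_false, card_filter_top_two_true,
      card_extensions_of_high_true (by omega) hHigh (by simp)]
    simpa using (Ni_natCast n).symm

def branch (c : Fin m → Bool) (i : Fin m) : Finset (Fin m → Bool) :=
  (RC m).filter fun c' => c' i = false ∧ c i = true ∧ ∀ j, i < j → c' j = c j

lemma gIdx_eq_sum_card_branch (c : Fin m → Bool) : gIdx m c = ∑ i, (branch c i).card := by
  have hunion : (RC m).filter (fun c' => lexLt c' c) = Finset.univ.biUnion (branch c) := by
    ext c'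
    rw [Finset.mem_filter, lexLt]
    simp only [Finset.mem_biUnion, Finset.mem_univ, true_and, branch, Finset.mem_filter,
      exists_and_left]
  have hdisj : ∀ i k, i < k → Disjoint (branch c i) (branch c k) := by
    refine fun i k hlt => Finset.disjoint_left.2 fun c' hi hk => ?_
    simp only [branch, Finset.mem_filter] at hi hk
    have := hi.2.2.2 k hlt
    rw [hk.2.1, hk.2.2.1] at this
    exact Bool.false_ne_true this
  rw [gIdx, hunion, Finset.card_biUnion]
  exact fun i _ k _ hik => hik.lt_or_gt.elim (hdisj i k) fun h => (hdisj k i h).symm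

lemma branch_eq_extensions {c : Fin m → Bool} {i : Fin m} (hci : c i = true) :
    branch c i = extensions i (Function.update c i false) := by
  refine Finset.filter_congr fun c' _ =>
    ⟨fun ⟨h0, _, habove⟩ j hj => ?_, fun h => ⟨?_, hci, fun j hj => ?_⟩⟩
  · rcases (Fin.le_iff_val_le_val.2 hj).eq_or_lt with rfl | hlt
    · simpa using h0
    · rw [Function.update_of_ne hlt.ne', habove j hlt]
  · simpa using h i le_rfl
  · rw [h j hj.le, Function.update_of_ne hj.ne']

lemma extensions_update_eq_empty {c : Fin m → Bool} {i : Fin m} (h : (i : ℕ) + 2 < m)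
    (hc2 : c ⟨i + 2, h⟩ = false) : extensions i (Function.update c i false) = ∅ := by
  refine Finset.filter_false_of_mem fun c' hc' hagree =>
    mem_RC.1 hc' i ⟨i + 2, h⟩ rfl ⟨?_, ?_⟩
  · simpa using hagree i le_rfl
  · rw [hagree _ (by simp), Function.update_of_ne (Fin.ne_of_val_ne (by simp)), hc2]

lemma highRR_update {c : Fin m → Bool} (hc : RRok m c) {i : Fin m}
    (hc2 : ∀ h : (i : ℕ) + 2 < m, c ⟨i + 2, h⟩ = true) :
    HighRR i (Function.update c i false) := by
  intro a b hab hia ⟨ha, hb⟩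
  rw [Function.update_of_ne (Fin.ne_of_val_ne (by omega))] at hb
  rcases hia.eq_or_lt with hai | hai
  · have hb2 : b = ⟨i + 2, by omega⟩ := Fin.ext (show (b : ℕ) = i + 2 by omega)
    rw [hb2, hc2] at hb
    exact Bool.true_eq_false_eq_False hb
  · rw [Function.update_of_ne (Fin.ne_of_val_ne hai.ne')] at ha
    exact hc a b hab ⟨ha, hb⟩

lemma compatible_update_iff {c : Fin m → Bool} {i : Fin m} (w : Fin i → Bool) :
    Compatible (Function.update c i false) w ↔
      (∀ p : Fin i, (p : ℕ) + 2 = i → w p = true) ∧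
      ∀ (p : Fin i) (h : (i : ℕ) + 1 < m), (p : ℕ) + 1 = i → c ⟨i + 1, h⟩ = false →
        w p = true := by
  constructor
  · intro hw
    refine ⟨fun p hp => hw p i hp.symm le_rfl (by simp), fun p h hp hc1 =>
      hw p ⟨i + 1, h⟩ (show (i : ℕ) + 1 = p + 2 by omega) (by simp) ?_⟩
    rwa [Function.update_of_ne (Fin.ne_of_val_ne (by simp))]
  · rintro ⟨h2, h1⟩ p ⟨j, hjm⟩ (hj : j = p + 2) (hij : (i : ℕ) ≤ j) htj
    obtain hji | rfl : j = i ∨ j = i + 1 := by have := p.2; omega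
    · exact h2 p (by omega)
    · refine h1 p hjm (by omega) ?_
      rwa [Function.update_of_ne (Fin.ne_of_val_ne (by simp))] at htj

lemma card_extensions_update_of_next_false {c : Fin m → Bool} (hc : RRok m c) {i : Fin m}
    (hc2 : ∀ h : (i : ℕ) + 2 < m, c ⟨i + 2, h⟩ = true) (h1 : (i : ℕ) + 1 < m)
    (hc1 : c ⟨i + 1, h1⟩ = false) :
    (extensions i (Function.update c i false)).card = Ni (i - 2) := by
  rw [card_extensions i.2.le (highRR_update hc hc2), ← card_filter_top_two_true]
  congr 1
  refine Finset.filter_congr fun w _ => (compatible_update_iff w).trans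
    ⟨fun ⟨h2, h1'⟩ p hp => ?_,
      fun h => ⟨fun p hp => h p hp.ge, fun p _ hp _ => h p (by omega)⟩⟩
  obtain hp | hp : (p : ℕ) + 2 = i ∨ (p : ℕ) + 1 = i := by have := p.2; omega
  exacts [h2 p hp, h1' p h1 hp hc1]

lemma card_extensions_update_of_next_true {c : Fin m → Bool} (hc : RRok m c) {i : Fin m}
    (hc2 : ∀ h : (i : ℕ) + 2 < m, c ⟨i + 2, h⟩ = true)
    (hc1 : ∀ h : (i : ℕ) + 1 < m, c ⟨i + 1, h⟩ = true) :
    (extensions i (Function.update c i false)).card = Ni (i - 2) + Ni (i - 3) := by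
  rw [card_extensions i.2.le (highRR_update hc hc2), ← card_filter_second_top_true]
  congr 1
  refine Finset.filter_congr fun w _ => (compatible_update_iff w).trans
    ⟨And.left, fun h => ⟨h, fun p h1 _ hfalse => ?_⟩⟩
  simp [hc1 h1] at hfalse

lemma card_branch {c : Fin m → Bool} (hc : c ∈ RC m) (i : Fin m) :
    ((branch c i).card : ℤ) =
      (if c i = true then (1 : ℤ) else 0) *
        ((1 - (if c i = true ∧ ∃ h : (i : ℕ) + 2 < m, c ⟨(i : ℕ) + 2, h⟩ = false
                then (1 : ℤ) else 0)) * (Ni ((i : ℤ) - 2) : ℤ)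
         + (1 - (if c i = true ∧ ∃ h : (i : ℕ) + 2 < m, c ⟨(i : ℕ) + 2, h⟩ = false
                  then (1 : ℤ) else 0)
              - (if c i = true ∧ (∃ h : (i : ℕ) + 1 < m, c ⟨(i : ℕ) + 1, h⟩ = false) ∧
                    (∀ h : (i : ℕ) + 2 < m, c ⟨(i : ℕ) + 2, h⟩ = true)
                  then (1 : ℤ) else 0)) * (Ni ((i : ℤ) - 3) : ℤ)) := by
  by_cases hci : c i = true
  swap
  · simp [branch, hci]
  rw [branch_eq_extensions hci]
  by_cases hy1 : ∃ h : (i : ℕ) + 2 < m, c ⟨i + 2, h⟩ = false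
  · obtain ⟨h2, hc2⟩ := hy1
    simp [extensions_update_eq_empty h2 hc2, hci, hc2, h2]
  have hc2 : ∀ h : (i : ℕ) + 2 < m, c ⟨i + 2, h⟩ = true := by simpa using hy1
  by_cases hy2 : ∃ h : (i : ℕ) + 1 < m, c ⟨i + 1, h⟩ = false
  · obtain ⟨h1, hc1⟩ := hy2
    rw [card_extensions_update_of_next_false (mem_RC.1 hc) hc2 h1 hc1]
    simp [hci, hc2, h1, hc1]
  · have hc1 : ∀ h : (i : ℕ) + 1 < m, c ⟨i + 1, h⟩ = true := by simpa using hy2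
    rw [card_extensions_update_of_next_true (mem_RC.1 hc) hc2 hc1]
    simp [hci, hy1, hy2]

end LOCO

theorem stmt6_general (m : ℕ) (c : Fin m → Bool) (hc : c ∈ RC m) :
    (gIdx m c : ℤ) =
      ∑ i : Fin m,
        (if c i = true then (1 : ℤ) else 0) *
          ((1 - (if c i = true ∧ ∃ h : (i : ℕ) + 2 < m, c ⟨(i : ℕ) + 2, h⟩ = false
                  then (1 : ℤ) else 0)) * (Ni ((i : ℤ) - 2) : ℤ)
           + (1 - (if c i = true ∧ ∃ h : (i : ℕ) + 2 < m, c ⟨(i : ℕ) + 2, h⟩ = false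
                    then (1 : ℤ) else 0)
                - (if c i = true ∧ (∃ h : (i : ℕ) + 1 < m, c ⟨(i : ℕ) + 1, h⟩ = false) ∧
                      (∀ h : (i : ℕ) + 2 < m, c ⟨(i : ℕ) + 2, h⟩ = true)
                    then (1 : ℤ) else 0)) * (Ni ((i : ℤ) - 3) : ℤ)) := by
  rw [LOCO.gIdx_eq_sum_card_branch, Nat.cast_sum]
  exact Finset.sum_congr rfl fun i _ => LOCO.card_branch hc i

/-- The encoding-decoding rule:
`g(c) = Σ_i a_i [(1 - y_{i,1}) N(i-2) + (1 - y_{i,1} - y_{i,2}) N(i-3)]`. -/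
theorem stmt6 (m : ℕ) (hm : 1 ≤ m) (c : Fin m → Bool) (hc : c ∈ RC m) :
    (gIdx m c : ℤ) =
      ∑ i : Fin m,
        (if c i = true then (1 : ℤ) else 0) *
          ((1 - (if c i = true ∧ ∃ h : (i : ℕ) + 2 < m, c ⟨(i : ℕ) + 2, h⟩ = false
                  then (1 : ℤ) else 0)) * (Ni ((i : ℤ) - 2) : ℤ)
           + (1 - (if c i = true ∧ ∃ h : (i : ℕ) + 2 < m, c ⟨(i : ℕ) + 2, h⟩ = false
                    then (1 : ℤ) else 0)
                - (if c i = true ∧ (∃ h : (i : ℕ) + 1 < m, c ⟨(i : ℕ) + 1, h⟩ = false) ∧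
                      (∀ h : (i : ℕ) + 2 < m, c ⟨(i : ℕ) + 2, h⟩ = true)
                    then (1 : ℤ) else 0)) * (Ni ((i : ℤ) - 3) : ℤ)) :=
  stmt6_general m c hc
end

section
/- Let m ≥ 1 and let c = c_{m−1} ⋯ c_0 ∈ A_m with a_i ∈ {0, 1} the integer value of bit c_i, and with the conventions a_m := 0 and N_A(−1) := 1, where N_A(k) = |A_k|. Then the lexicographic index of c in A_m satisfies g(c) = Σ_{i=0}^{m−1} a_i N_A(i − a_{i+1}). -/
/-- The constraint defining `A_m`: no index `i` with `i + 2 ≤ m - 1` such that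
`c i = 1` and `c (i+2) = 1` (avoiding the substrings `101` and `111`). -/
def Aok (m : ℕ) (c : Fin m → Bool) : Prop :=
  ∀ i j : Fin m, (j : ℕ) = (i : ℕ) + 2 → ¬(c i = true ∧ c j = true)

instance (m : ℕ) : DecidablePred (Aok m) := fun c => by
  unfold Aok; infer_instance

/-- `A_m`: all binary words of length `m` with no two `1`'s at distance exactly `2`. -/
def A (m : ℕ) : Finset (Fin m → Bool) := Finset.univ.filter (Aok m)

/-- `N_A m = |A_m|`. -/
def NA (m : ℕ) : ℕ := (A m).card

/-- `N_A` extended to integer arguments with the convention `N_A (-1) = 1`. -/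
def NAi : ℤ → ℕ := fun k => if 0 ≤ k then NA k.toNat else 1

/-- The integer value `a_i` of bit `c_i`, with the convention `a_m = 0`
(indeed `a_i = 0` for every out-of-range index). -/
def aext (m : ℕ) (c : Fin m → Bool) (i : ℕ) : ℤ :=
  if h : i < m then (if c ⟨i, h⟩ = true then 1 else 0) else 0

/-- The lexicographic index of `c` in `A_m`: the number of codewords strictly smaller. -/
def gA (m : ℕ) (c : Fin m → Bool) : ℕ := ((A m).filter (fun c' => lexLt c' c)).card

/-!
Split the codewords below `c` according to the highest position `k` at which they differ
from `c`; there `c` has a `1` and the codeword a `0`. Above `k` the codeword copies `c`, and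
below `k` it is an arbitrary word of `A_k`, except that its top bit must be `0` when
`c_{k+1} = 1`: since bit `k` is `0`, no other forbidden pair straddles position `k`. The
words of `A_k` with top bit `0` are those of `A_{k-1}` extended by a `0`, so position `k`
contributes `N_A(k - a_{k+1})`.
-/

open Finset

lemma mem_A {m : ℕ} {c : Fin m → Bool} : c ∈ A m ↔ Aok m c := by
  simp [A]

lemma Aok.comp_castLE {m n : ℕ} (hnm : n ≤ m) {c : Fin m → Bool} (hc : Aok m c) :
    Aok n (c ∘ Fin.castLE hnm) :=
  fun _ _ hij => hc _ _ hij

lemma Aok.snoc_false {n : ℕ} {e : Fin n → Bool} (he : Aok n e) :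
    Aok (n + 1) (Fin.snoc e false) := by
  intro i j hij ⟨hi, hj⟩
  induction j using Fin.lastCases with
  | last => simp at hj
  | cast j =>
    obtain ⟨i, rfl⟩ : ∃ i' : Fin n, i = i'.castSucc :=
      ⟨⟨i, by simp at hij; omega⟩, rfl⟩
    simp only [Fin.snoc_castSucc] at hi hj
    exact he i j (by simpa using hij) ⟨hi, hj⟩

lemma card_filter_A_last_eq_false (n : ℕ) :
    #{d ∈ A (n + 1) | d (Fin.last n) = false} = NA n := by
  refine card_bij' (fun d _ => Fin.init d) (fun e _ => Fin.snoc e false) ?_ ?_ ?_ ?_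
  · intro d hd
    rw [mem_filter, mem_A] at hd
    exact mem_A.2 (hd.1.comp_castLE n.le_succ)
  · intro e he
    simp only [mem_filter, mem_A, Fin.snoc_last, and_true]
    exact (mem_A.1 he).snoc_false
  · intro d hd
    rw [mem_filter] at hd
    rw [← hd.2, Fin.snoc_init_self]
  · intro e _
    exact Fin.init_snoc _ _

lemma card_filter_A_top_eq_false (k : ℕ) :
    #{d ∈ A k | ∀ i : Fin k, (i : ℕ) + 1 = k → d i = false} = NAi (k - 1) := by
  cases k with
  | zero => simp [NAi]; decide
  | succ n =>
    have htop : ∀ d : Fin (n + 1) → Bool,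
        (∀ i : Fin (n + 1), (i : ℕ) + 1 = n + 1 → d i = false) ↔ d (Fin.last n) = false :=
      fun d => ⟨fun h => h _ rfl,
        fun h i hi => by rwa [show i = Fin.last n from Fin.ext (by simpa using hi)]⟩
    simp only [htop, card_filter_A_last_eq_false, NAi]
    simp

section Bits

variable {m : ℕ} (c : Fin m → Bool)

lemma aext_coe_fin (k : Fin m) : aext m c k = if c k = true then 1 else 0 := by
  simp [aext]

lemma aext_eq_zero_or_one (t : ℕ) : aext m c t = 0 ∨ aext m c t = 1 := by
  unfold aext; split_ifs <;> simp

lemma aext_eq_one_iff (t : ℕ) : aext m c t = 1 ↔ ∃ h : t < m, c ⟨t, h⟩ = true := by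
  unfold aext; split_ifs <;> simp_all

end Bits

section FirstDifference

variable {m : ℕ} (c : Fin m → Bool) (k : Fin m)

def belowAt : Finset (Fin m → Bool) :=
  {c' ∈ A m | c' k = false ∧ c k = true ∧ ∀ j, k < j → c' j = c j}

def splice (d : Fin k → Bool) : Fin m → Bool :=
  fun i => if h : (i : ℕ) < k then d ⟨i, h⟩ else if (i : ℕ) = k then false else c i

lemma splice_comp_castLE (d : Fin k → Bool) : splice c k d ∘ Fin.castLE k.isLt.le = d := by
  funext i; simp [splice]

lemma splice_comp_castLE_of_mem_belowAt {c' : Fin m → Bool} (hc' : c' ∈ belowAt c k) :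
    splice c k (c' ∘ Fin.castLE k.isLt.le) = c' := by
  simp only [belowAt, mem_filter] at hc'
  obtain ⟨-, hk, -, hagree⟩ := hc'
  funext i
  simp only [splice, Function.comp_apply]
  split_ifs with hik hik'
  · rfl
  · rw [Fin.ext hik', hk]
  · exact (hagree i (by rw [Fin.lt_def]; omega)).symm

lemma aok_splice_iff (hc : Aok m c) (d : Fin k → Bool) :
    Aok m (splice c k d) ↔
      Aok k d ∧ (aext m c (k + 1) = 1 → ∀ i : Fin k, (i : ℕ) + 1 = k → d i = false) := by
  constructor
  · intro h
    refine ⟨splice_comp_castLE c k d ▸ h.comp_castLE k.isLt.le, fun hck1 i hi => ?_⟩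
    obtain ⟨hlt, hct⟩ := (aext_eq_one_iff c _).1 hck1
    have := h ⟨i, i.isLt.trans k.isLt⟩ ⟨k + 1, hlt⟩ (by simp; omega)
    simpa [splice, hct, Fin.ext_iff] using this
  · rintro ⟨hd, hgap⟩ i j hij ⟨hi, hj⟩
    simp only [splice] at hi hj
    split_ifs at hi hj with hi_lt hj_lt hj_eq hi_eq hj_lt'
    · exact hd ⟨i, hi_lt⟩ ⟨j, hj_lt⟩ hij ⟨hi, hj⟩
    · have hj1 : (j : ℕ) = k + 1 := by omega
      have hck1 : aext m c (k + 1) = 1 := by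
        rw [aext_eq_one_iff]; exact ⟨hj1 ▸ j.isLt, by simpa only [← hj1] using hj⟩
      simp [hgap hck1 ⟨i, hi_lt⟩ (by simp only; omega)] at hi
    · omega
    · exact hc i j hij ⟨hi, hj⟩

lemma card_belowAt (hc : Aok m c) (hck : c k = true) :
    #(belowAt c k) = NAi (k - aext m c (k + 1)) := by
  have hbij : #(belowAt c k) =
      #{d ∈ A k | aext m c (k + 1) = 1 → ∀ i : Fin k, (i : ℕ) + 1 = k → d i = false} := by
    refine card_bij' (fun c' _ => c' ∘ Fin.castLE k.isLt.le) (fun d _ => splice c k d)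
      ?_ ?_ ?_ ?_
    · intro c' hc'
      have hok := (mem_A.1 (mem_filter.1 hc').1)
      rw [← splice_comp_castLE_of_mem_belowAt c k hc', aok_splice_iff c k hc] at hok
      simpa only [mem_filter, mem_A] using hok
    · intro d hd
      rw [mem_filter, mem_A, ← aok_splice_iff c k hc] at hd
      simp only [belowAt, mem_filter, mem_A]
      refine ⟨hd, by simp [splice], hck, fun j hj => ?_⟩
      simp [splice, Fin.lt_def.1 hj |>.not_gt, (Fin.lt_def.1 hj).ne']
    · intro c' hc'
      exact splice_comp_castLE_of_mem_belowAt c k hc'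
    · intro d _
      exact splice_comp_castLE c k d
  rw [hbij]
  rcases aext_eq_zero_or_one c (k + 1) with h | h
  · rw [h, NAi, sub_zero, if_pos (by positivity), Int.toNat_natCast, NA]
    simp
  · simp only [h, forall_const]
    exact card_filter_A_top_eq_false k

lemma belowAt_eq_empty (hck : c k = false) : belowAt c k = ∅ := by
  simp [belowAt, hck]

lemma disjoint_belowAt {l : Fin m} (hkl : k ≠ l) :
    Disjoint (belowAt c k) (belowAt c l) := by
  rw [disjoint_left]
  intro c' hk hl
  simp only [belowAt, mem_filter] at hk hl
  rcases hkl.lt_or_gt with h | h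
  · simpa [hl.2.1, hl.2.2.1] using hk.2.2.2 l h
  · simpa [hk.2.1, hk.2.2.1] using hl.2.2.2 k h

lemma gA_eq_sum_card_belowAt : gA m c = ∑ k, #(belowAt c k) := by
  rw [gA, ← card_biUnion fun k _ l _ hkl => disjoint_belowAt c k hkl]
  congr 1
  ext c'
  rw [mem_filter, mem_biUnion]
  simp [belowAt, lexLt]

end FirstDifference

theorem stmt9_general (m : ℕ) (c : Fin m → Bool) (hc : c ∈ A m) :
    (gA m c : ℤ) =
      ∑ i : Fin m, aext m c i * (NAi ((i : ℤ) - aext m c ((i : ℕ) + 1)) : ℤ) := by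
  rw [gA_eq_sum_card_belowAt, Nat.cast_sum]
  refine sum_congr rfl fun k _ => ?_
  rw [aext_coe_fin]
  cases hck : c k
  · simp [belowAt_eq_empty c k hck]
  · simp [card_belowAt c k (mem_A.1 hc) hck]

/-- The encoding-decoding rule for `A_m`: `g(c) = Σ_{i=0}^{m-1} a_i N_A(i - a_{i+1})`. -/
theorem stmt9 (m : ℕ) (hm : 1 ≤ m) (c : Fin m → Bool) (hc : c ∈ A m) :
    (gA m c : ℤ) =
      ∑ i : Fin m, aext m c i * (NAi ((i : ℤ) - aext m c ((i : ℕ) + 1)) : ℤ) :=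
  stmt9_general m c hc
end

section
/- For every m ≥ 0, N(m) = F(⌊m/2⌋ + 2) · F(⌈m/2⌉ + 2), where F is the Fibonacci sequence with F(1) = F(2) = 1; this holds because a binary word satisfies the RR constraint (no two 0's at distance exactly 2) if and only if each of its two interleaved subsequences (even-indexed positions and odd-indexed positions) contains no two adjacent 0's. -/
open Finset

def NoAdjZeros {k : ℕ} (c : Fin k → Bool) : Prop :=
  ∀ i j : Fin k, (j : ℕ) = i + 1 → ¬(c i = false ∧ c j = false)

instance (k : ℕ) : DecidablePred (@NoAdjZeros k) := fun c => by
  unfold NoAdjZeros; infer_instance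

theorem noAdjZeros_iff_castSucc_succ {k : ℕ} {c : Fin (k + 1) → Bool} :
    NoAdjZeros c ↔ ∀ i : Fin k, ¬(c i.castSucc = false ∧ c i.succ = false) := by
  refine ⟨fun h i => h _ _ rfl, fun h i j hij => ?_⟩
  have hi : (i : ℕ) < k := by omega
  obtain rfl : j = (⟨i, hi⟩ : Fin k).succ := Fin.ext hij
  exact h ⟨i, hi⟩

theorem noAdjZeros_cons_cons {k : ℕ} (a b : Bool) (d : Fin k → Bool) :
    NoAdjZeros (Fin.cons a (Fin.cons b d) : Fin (k + 2) → Bool) ↔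
      ¬(a = false ∧ b = false) ∧ NoAdjZeros (Fin.cons b d : Fin (k + 1) → Bool) := by
  simp [noAdjZeros_iff_castSucc_succ, Fin.forall_fin_succ]

theorem noAdjZeros_cons_true {k : ℕ} (d : Fin k → Bool) :
    NoAdjZeros (Fin.cons true d : Fin (k + 1) → Bool) ↔ NoAdjZeros d := by
  cases k with
  | zero => exact iff_of_true (fun i j h => by omega) (fun i => i.elim0)
  | succ k =>
    rw [← Fin.cons_self_tail d, noAdjZeros_cons_cons]
    simp

theorem card_filter_pi_fin_succ {α : Type*} [Fintype α] {n : ℕ}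
    (p : (Fin (n + 1) → α) → Prop) [DecidablePred p] :
    #{c | p c} = ∑ a, #{d | p (Fin.cons a d)} := by
  simp only [card_filter]
  rw [← (Fin.consEquiv fun _ => α).sum_comp, Fintype.sum_prod_type]
  rfl

theorem card_filter_bool_fin_succ {n : ℕ} (p : (Fin (n + 1) → Bool) → Prop) [DecidablePred p] :
    #{c | p c} = #{d | p (Fin.cons true d)} + #{d | p (Fin.cons false d)} := by
  rw [card_filter_pi_fin_succ, Fintype.sum_bool]

theorem card_noAdjZeros_add_two (k : ℕ) :
    #{c : Fin (k + 2) → Bool | NoAdjZeros c} =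
      #{c : Fin (k + 1) → Bool | NoAdjZeros c} + #{c : Fin k → Bool | NoAdjZeros c} := by
  rw [card_filter_bool_fin_succ,
    card_filter_bool_fin_succ (fun d => NoAdjZeros (Fin.cons false d))]
  simp [noAdjZeros_cons_true, noAdjZeros_cons_cons]

theorem card_noAdjZeros (k : ℕ) : #{c : Fin k → Bool | NoAdjZeros c} = Nat.fib (k + 2) := by
  induction k using Nat.twoStepInduction with
  | zero => decide
  | one => decide
  | more k ih₀ ih₁ =>
    rw [card_noAdjZeros_add_two, ih₀, ih₁, Nat.fib_add_two (n := k + 2), add_comm]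

def finEvenOddEquiv (m : ℕ) : Fin ((m + 1) / 2) ⊕ Fin (m / 2) ≃ Fin m where
  toFun := Sum.elim (fun i => ⟨2 * i, by omega⟩) (fun i => ⟨2 * i + 1, by omega⟩)
  invFun i := if h : (i : ℕ) % 2 = 0 then .inl ⟨i / 2, by omega⟩ else .inr ⟨i / 2, by omega⟩
  left_inv := by rintro (i | i) <;> simp [Fin.ext_iff]; omega
  right_inv i := by by_cases h : (i : ℕ) % 2 = 0 <;> simp [h, Fin.ext_iff] <;> omega

section Subwords

variable {α : Type*} {m : ℕ}

def evenSubword (c : Fin m → α) : Fin ((m + 1) / 2) → α := fun i => c ⟨2 * i, by omega⟩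

def oddSubword (c : Fin m → α) : Fin (m / 2) → α := fun i => c ⟨2 * i + 1, by omega⟩

def evenOddSubwordEquiv (m : ℕ) :
    (Fin m → α) ≃ (Fin ((m + 1) / 2) → α) × (Fin (m / 2) → α) :=
  ((finEvenOddEquiv m).arrowCongr (Equiv.refl α)).symm.trans (Equiv.sumArrowEquivProdArrow _ _ _)

@[simp]
theorem evenOddSubwordEquiv_apply (c : Fin m → α) :
    evenOddSubwordEquiv m c = (evenSubword c, oddSubword c) :=
  rfl

end Subwords

theorem rrOk_iff_noAdjZeros {m : ℕ} (c : Fin m → Bool) :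
    RRok m c ↔ NoAdjZeros (evenSubword c) ∧ NoAdjZeros (oddSubword c) := by
  refine ⟨fun h => ⟨fun i j hij => h _ _ (by dsimp only; omega),
    fun i j hij => h _ _ (by dsimp only; omega)⟩, ?_⟩
  rintro ⟨heven, hodd⟩ ⟨i, hi⟩ ⟨j, hj⟩ (rfl : j = i + 2)
  obtain ⟨k, rfl | rfl⟩ := Nat.even_or_odd' i
  · exact heven ⟨k, by omega⟩ ⟨k + 1, by omega⟩ rfl
  · exact hodd ⟨k, by omega⟩ ⟨k + 1, by omega⟩ rfl

theorem noAdjZeros_evenSubword_iff {m : ℕ} (c : Fin m → Bool) :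
    NoAdjZeros (evenSubword c) ↔ ∀ k : ℕ, ∀ h : 2 * k + 2 < m,
      ¬(c ⟨2 * k, Nat.lt_of_add_right_lt h⟩ = false ∧ c ⟨2 * k + 2, h⟩ = false) := by
  refine ⟨fun h k hk => h ⟨k, by omega⟩ ⟨k + 1, by omega⟩ rfl, ?_⟩
  rintro h i ⟨j, hj⟩ (rfl : j = i + 1)
  exact h i (by omega)

theorem noAdjZeros_oddSubword_iff {m : ℕ} (c : Fin m → Bool) :
    NoAdjZeros (oddSubword c) ↔ ∀ k : ℕ, ∀ h : 2 * k + 3 < m,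
      ¬(c ⟨2 * k + 1, Nat.lt_of_add_right_lt (k := 2) h⟩ = false ∧ c ⟨2 * k + 3, h⟩ = false) := by
  refine ⟨fun h k hk => h ⟨k, by omega⟩ ⟨k + 1, by omega⟩ rfl, ?_⟩
  rintro h i ⟨j, hj⟩ (rfl : j = i + 1)
  exact h i (by omega)

theorem N_eq_card_mul_card (m : ℕ) :
    N m = #{c : Fin ((m + 1) / 2) → Bool | NoAdjZeros c} *
      #{c : Fin (m / 2) → Bool | NoAdjZeros c} := by
  rw [N, RC, ← card_product]
  exact card_equiv (evenOddSubwordEquiv m) fun c => by simp [rrOk_iff_noAdjZeros]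

/-- `N m = F(⌊m/2⌋ + 2) ⬝ F(⌈m/2⌉ + 2)`, which holds because a word satisfies the RR
constraint iff each of its two interleaved subsequences (even-indexed and odd-indexed
positions) contains no two adjacent `0`'s. -/
theorem stmt10 :
    (∀ m : ℕ, N m = Nat.fib (m / 2 + 2) * Nat.fib ((m + 1) / 2 + 2)) ∧
    (∀ m : ℕ, ∀ c : Fin m → Bool, RRok m c ↔
      ((∀ k : ℕ, ∀ h : 2 * k + 2 < m,
          ¬(c ⟨2 * k, by omega⟩ = false ∧ c ⟨2 * k + 2, h⟩ = false)) ∧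
       (∀ k : ℕ, ∀ h : 2 * k + 3 < m,
          ¬(c ⟨2 * k + 1, by omega⟩ = false ∧ c ⟨2 * k + 3, h⟩ = false)))) := by
  refine ⟨fun m => ?_, fun m c => ?_⟩
  · rw [N_eq_card_mul_card, card_noAdjZeros, card_noAdjZeros, mul_comm]
  · rw [rrOk_iff_noAdjZeros, noAdjZeros_evenSubword_iff, noAdjZeros_oddSubword_iff]
end

section
/- Let p ≥ 2, q = 2^p, and let l₁, l₂, l₃ ∈ {0, …, q−1} be three consecutive charge levels with left-most page bits b_t = bit p−1 of map(l_t). If the level pattern (l₁, l₂, l₃) belongs to L_q (i.e., l₁ ≥ q/2, l₃ ≥ q/2, and l₂ < min(l₁, l₃)), then b₁ = 0 and b₃ = 0, so that b₁ b₂ b₃ ∈ {000, 010}. Consequently, if the binary sequence written on the left-most page contains no two 0's at distance exactly 2 (avoids 000 and 010), then no three consecutive levels form a pattern in L_q, regardless of the data on the other p−1 pages. -/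
/-- The recursive alternate Gray mapping: `map(v) = (2^p - 1) XOR (v XOR ⌊v/2⌋)`,
the bitwise complement of the standard binary reflected Gray code. -/
def ragm (p v : ℕ) : ℕ := (2 ^ p - 1) ^^^ (v ^^^ (v / 2))

/-! The most significant bit of the Gray code `v ^^^ v / 2` of a `p`-bit number `v` is the most
significant bit of `v`, and `ragm` complements it; so every level in the upper half
`[2^(p-1), 2^p)` writes `0` on the left-most page. A pattern of `L_q` has its two outer levels in
that upper half, hence left-most page bits `0` at distance `2`. -/

lemma Nat.testBit_xor_div_two_of_lt {v k : ℕ} (hv : v < 2 ^ (k + 1)) :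
    (v ^^^ v / 2).testBit k = v.testBit k := by
  rw [Nat.testBit_xor, Nat.testBit_div_two, Nat.testBit_lt_two_pow hv, Bool.xor_false]

lemma testBit_ragm {p i : ℕ} (v : ℕ) (hi : i < p) :
    (ragm p v).testBit i = !(v ^^^ v / 2).testBit i := by
  rw [ragm, Nat.testBit_xor, Nat.testBit_two_pow_sub_one, decide_eq_true hi, Bool.true_xor]

lemma testBit_ragm_pred_of_two_pow_pred_le {p l : ℕ} (hl : l < 2 ^ p) (hl' : 2 ^ (p - 1) ≤ l) :
    (ragm p l).testBit (p - 1) = false := by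
  obtain ⟨k, rfl⟩ : ∃ k, p = k + 1 := Nat.exists_eq_add_one.mpr <| Nat.pos_of_ne_zero <| by
    rintro rfl
    simp at hl hl'
    omega
  rw [Nat.add_sub_cancel] at hl' ⊢
  rw [testBit_ragm l k.lt_succ_self, Nat.testBit_xor_div_two_of_lt hl,
    Nat.testBit_of_two_pow_le_and_two_pow_add_one_gt hl' hl, Bool.not_true]

theorem stmt15_general (p : ℕ) :
    (∀ l1 l2 l3 : ℕ, l1 < 2 ^ p → l2 < 2 ^ p → l3 < 2 ^ p →
      2 ^ (p - 1) ≤ l1 → 2 ^ (p - 1) ≤ l3 → l2 < min l1 l3 →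
      Nat.testBit (ragm p l1) (p - 1) = false ∧
        Nat.testBit (ragm p l3) (p - 1) = false) ∧
    (∀ lev : ℕ → ℕ, (∀ n, lev n < 2 ^ p) →
      (∀ n, ¬(Nat.testBit (ragm p (lev n)) (p - 1) = false ∧
              Nat.testBit (ragm p (lev (n + 2))) (p - 1) = false)) →
      ∀ n, ¬(2 ^ (p - 1) ≤ lev n ∧ 2 ^ (p - 1) ≤ lev (n + 2) ∧
              lev (n + 1) < min (lev n) (lev (n + 2)))) := by
  refine ⟨fun l1 _ l3 h1 _ h3 hb1 hb3 _ => ?_, fun lev hlev hvoid n ⟨hb1, hb3, _⟩ => ?_⟩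
  · exact ⟨testBit_ragm_pred_of_two_pow_pred_le h1 hb1,
      testBit_ragm_pred_of_two_pow_pred_le h3 hb3⟩
  · exact hvoid n ⟨testBit_ragm_pred_of_two_pow_pred_le (hlev n) hb1,
      testBit_ragm_pred_of_two_pow_pred_le (hlev (n + 2)) hb3⟩

/-- If a pattern of three consecutive levels `(l₁, l₂, l₃)` is in `L_q` (with `q = 2^p`),
then the left-most page bits of `l₁` and `l₃` are both `0`; consequently, if the left-most
page sequence has no two `0`'s at distance exactly `2`, then no three consecutive levels
form a pattern in `L_q`, regardless of the data on the other pages. -/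
theorem stmt15 (p : ℕ) (hp : 2 ≤ p) :
    (∀ l1 l2 l3 : ℕ, l1 < 2 ^ p → l2 < 2 ^ p → l3 < 2 ^ p →
      2 ^ (p - 1) ≤ l1 → 2 ^ (p - 1) ≤ l3 → l2 < min l1 l3 →
      Nat.testBit (ragm p l1) (p - 1) = false ∧
        Nat.testBit (ragm p l3) (p - 1) = false) ∧
    (∀ lev : ℕ → ℕ, (∀ n, lev n < 2 ^ p) →
      (∀ n, ¬(Nat.testBit (ragm p (lev n)) (p - 1) = false ∧
              Nat.testBit (ragm p (lev (n + 2))) (p - 1) = false)) →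
      ∀ n, ¬(2 ^ (p - 1) ≤ lev n ∧ 2 ^ (p - 1) ≤ lev (n + 2) ∧
              lev (n + 1) < min (lev n) (lev (n + 2)))) :=
  stmt15_general p
end

section
/- Under the RLL (0,1) constraint, the asymptotic probability of the symbol 0 in a uniformly random codeword is (5 − √5)/10 ≈ 0.2764 (and that of the symbol 1 is (5 + √5)/10 ≈ 0.7236): letting Z(m) = Σ_{c ∈ B_m} (number of 0's in c), we have lim_{m→∞} Z(m) / (m · |B_m|) = (5 − √5)/10. -/
/-- The RLL (0,1) constraint: no two adjacent `0`'s (no substring `00`). -/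
def RLL01 (m : ℕ) (c : Fin m → Bool) : Prop :=
  ∀ i j : Fin m, (j : ℕ) = (i : ℕ) + 1 → ¬(c i = false ∧ c j = false)

instance (m : ℕ) : DecidablePred (RLL01 m) := fun c => by
  unfold RLL01; infer_instance

/-- `B_m`: all binary words of length `m` satisfying the RLL (0,1) constraint. -/
def B (m : ℕ) : Finset (Fin m → Bool) := Finset.univ.filter (RLL01 m)

/-- `Z m`: the total number of `0`'s over all words of `B_m`. -/
def Z (m : ℕ) : ℕ := ∑ c ∈ B m, (Finset.univ.filter (fun i => c i = false)).card

/-!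
A word of `B (m + 2)` is either `1` followed by a word of `B (m + 1)` or `01` followed by a word
of `B m`. Hence `|B (m + 2)| = |B (m + 1)| + |B m|` and `Z (m + 2) = Z (m + 1) + Z m + |B m|`, which
solve to `|B m| = F (m + 2)` and `5 Z m = (m + 1) (F m + F (m + 2)) - F (m + 1)`. Dividing by
`m F (m + 2)` and using `F m / F (m + 2) → ψ² = (3 - √5) / 2` gives the limit
`(1 + ψ²) / 5 = (5 - √5) / 10`.
-/

open Filter Topology Real

lemma rll01_cons_iff {m : ℕ} (b : Bool) (c : Fin m → Bool) :
    RLL01 (m + 1) (Fin.cons b c) ↔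
      (∀ i : Fin m, (i : ℕ) = 0 → ¬(b = false ∧ c i = false)) ∧ RLL01 m c := by
  simp [RLL01, Fin.forall_fin_succ]

def consEmb (b : Bool) (m : ℕ) : (Fin m → Bool) ↪ (Fin (m + 1) → Bool) :=
  ⟨fun c ↦ Fin.cons b c, fun _ _ h ↦ Fin.cons_right_injective (α := fun _ ↦ Bool) b h⟩

@[simp]
lemma consEmb_apply (b : Bool) {m : ℕ} (c : Fin m → Bool) : consEmb b m c = Fin.cons b c := rfl

lemma B_add_two (m : ℕ) :
    B (m + 2) = (B (m + 1)).map (consEmb true (m + 1)) ∪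
      ((B m).map (consEmb true m)).map (consEmb false (m + 1)) := by
  ext d
  induction d using Fin.consCases with | cons b d => ?_
  induction d using Fin.consCases with | cons b' c => ?_
  cases b <;> cases b' <;> simp [B, rll01_cons_iff, Fin.cons_inj]

lemma disjoint_map_consEmb {m : ℕ} (s t : Finset (Fin m → Bool)) :
    Disjoint (s.map (consEmb true m)) (t.map (consEmb false m)) := by
  simp [Finset.disjoint_left, Fin.cons_inj]

lemma card_B_add_two (m : ℕ) : (B (m + 2)).card = (B (m + 1)).card + (B m).card := by
  rw [B_add_two, Finset.card_union_of_disjoint (disjoint_map_consEmb _ _)]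
  simp only [Finset.card_map]

lemma card_B (m : ℕ) : (B m).card = Nat.fib (m + 2) := by
  induction m using Nat.twoStepInduction with
  | zero => decide
  | one => decide
  | more m ih ih' => rw [card_B_add_two, ih, ih', Nat.fib_add_two (n := m + 2), add_comm]

def numZeros {m : ℕ} (c : Fin m → Bool) : ℕ := (Finset.univ.filter (fun i => c i = false)).card

lemma numZeros_cons {m : ℕ} (b : Bool) (c : Fin m → Bool) :
    numZeros (Fin.cons b c : Fin (m + 1) → Bool) = (bif b then 0 else 1) + numZeros c := by
  simp only [numZeros, Finset.card_filter, Fin.sum_univ_succ, Fin.cons_zero, Fin.cons_succ]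
  cases b <;> rfl

lemma Z_add_two (m : ℕ) : Z (m + 2) = Z (m + 1) + Z m + (B m).card := by
  change ∑ c ∈ B (m + 2), numZeros c = ∑ c ∈ B (m + 1), numZeros c + ∑ c ∈ B m, numZeros c + _
  rw [B_add_two, Finset.sum_union (disjoint_map_consEmb _ _)]
  simp only [Finset.sum_map, consEmb_apply, numZeros_cons, cond_true, cond_false, zero_add,
    Finset.sum_add_distrib, Finset.sum_const, Finset.card_map, smul_eq_mul, mul_one]
  ring

lemma five_mul_Z_add_fib (m : ℕ) :
    5 * Z m + Nat.fib (m + 1) = (m + 1) * (Nat.fib m + Nat.fib (m + 2)) := by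
  induction m using Nat.twoStepInduction with
  | zero => decide
  | one => decide
  | more m ih ih' =>
    have h2 : Nat.fib (m + 2) = Nat.fib m + Nat.fib (m + 1) := Nat.fib_add_two
    have h3 : Nat.fib (m + 3) = Nat.fib m + 2 * Nat.fib (m + 1) := by
      rw [Nat.fib_add_two, h2]; ring
    have h4 : Nat.fib (m + 4) = 2 * Nat.fib m + 3 * Nat.fib (m + 1) := by
      rw [Nat.fib_add_two, h2, h3]; ring
    rw [h2] at ih
    rw [h2, h3] at ih'
    rw [Z_add_two, card_B, h2, h3, h4]
    linear_combination ih + ih'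

lemma tendsto_fib_div_fib_add_two :
    Tendsto (fun n ↦ (Nat.fib n / Nat.fib (n + 2) : ℝ)) atTop (𝓝 (goldenConj ^ 2)) := by
  have h := tendsto_fib_div_fib_succ_atTop.mul
    (tendsto_fib_div_fib_succ_atTop.comp (tendsto_add_atTop_nat 1))
  rw [neg_mul_neg, ← sq] at h
  refine h.congr fun n ↦ ?_
  have : (Nat.fib (n + 1) : ℝ) ≠ 0 := by exact_mod_cast (Nat.fib_pos.2 n.succ_pos).ne'
  simp only [Function.comp_apply]
  field_simp

lemma Z_div_eq {m : ℕ} (hm : m ≠ 0) :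
    (Z m : ℝ) / (m * (B m).card) =
      ((1 + (m : ℝ)⁻¹) * (Nat.fib m / Nat.fib (m + 2) + 1) -
        Nat.fib (m + 1) / Nat.fib (m + 2) * (m : ℝ)⁻¹) / 5 := by
  have hZ : (5 * Z m + Nat.fib (m + 1) : ℝ) = (m + 1) * (Nat.fib m + Nat.fib (m + 2)) := by
    exact_mod_cast five_mul_Z_add_fib m
  have hfib : (Nat.fib (m + 2) : ℝ) ≠ 0 := by exact_mod_cast (Nat.fib_pos.2 (by omega)).ne'
  rw [card_B]
  field_simp
  linear_combination hZ

/-- Under the RLL (0,1) constraint, the asymptotic probability of the symbol `0` in a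
uniformly random codeword is `(5 - √5)/10`. -/
theorem stmt18 :
    Filter.Tendsto (fun m : ℕ => (Z m : ℝ) / (m * (B m).card)) Filter.atTop
      (nhds ((5 - Real.sqrt 5) / 10)) := by
  have hinv := tendsto_inv_atTop_nhds_zero_nat (𝕜 := ℝ)
  have hlim := (((hinv.const_add 1).mul (tendsto_fib_div_fib_add_two.add_const 1)).sub
    ((tendsto_fib_div_fib_succ_atTop.comp (tendsto_add_atTop_nat 1)).mul hinv)).div_const 5
  have hval : ((1 + 0) * (goldenConj ^ 2 + 1) - -goldenConj * 0) / 5 = (5 - √5) / 10 := by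
    rw [goldenConj_sq, goldenConj]
    ring
  rw [← hval]
  refine hlim.congr' ?_
  filter_upwards [eventually_ne_atTop 0] with m hm
  exact (Z_div_eq hm).symm
end
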